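/- arXiv:1904.08168 — 3 statements merged into one kernel-verified Lean document; each statement's English description precedes it below -/
import Mathlib

section
/- Let R be a commutative ring, β ∈ R, and define x ⊕ y := x + y - βxy. Define n ⊙ x recursively by 0 ⊙ x = 0 and (n+1) ⊙ x = x ⊕ (n ⊙ x). Then for every natural number n, n ⊙ x = Σ_{i=1}^{n} C(n,i) · x^i · (-β)^{i-1}, where C(n,i) is the binomial coefficient. -/
/-- The multiplicative formal group law `x ⊕ y = x + y - β x y`. -/
def fgl {R : Type*} [CommRing R] (β x y : R) : R := x + y - β * x * y

/-- Formal multiplication by a natural number: `0 ⊙ x = 0`, `(n+1) ⊙ x = x ⊕ (n ⊙ x)`. -/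
def fmul {R : Type*} [CommRing R] (β : R) : ℕ → R → R
  | 0, _ => 0
  | n + 1, x => fgl β x (fmul β n x)

lemma fmul_range {R : Type*} [CommRing R] (β x : R) (n : ℕ) :
    fmul β n x = ∑ i ∈ Finset.range n, (n.choose (i+1) : R) * x ^ (i+1) * (-β) ^ i := by
  induction n with
  | zero => simp [fmul]
  | succ n ih =>
    have hsplit : ∀ i ∈ Finset.range (n+1),
        (((n+1).choose (i+1) : R)) * x ^ (i+1) * (-β) ^ i
        = (n.choose i : R) * x ^ (i+1) * (-β) ^ i
          + (n.choose (i+1) : R) * x ^ (i+1) * (-β) ^ i := by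
      intro i _
      rw [Nat.choose_succ_succ]
      push_cast
      ring
    rw [fmul, fgl, ih, Finset.sum_congr rfl hsplit, Finset.sum_add_distrib,
      Finset.sum_range_succ (fun i => (n.choose (i+1) : R) * x ^ (i+1) * (-β) ^ i),
      Finset.sum_range_succ' (fun i => (n.choose i : R) * x ^ (i+1) * (-β) ^ i)]
    simp only [Nat.choose_succ_self, Nat.cast_zero, zero_mul, add_zero, Nat.choose_zero_right,
      Nat.cast_one, one_mul, pow_zero, pow_one, mul_one]
    have : β * x * ∑ i ∈ Finset.range n, (n.choose (i+1) : R) * x ^ (i+1) * (-β) ^ i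
        = -∑ i ∈ Finset.range n, (n.choose (i+1) : R) * x ^ (i+1+1) * (-β) ^ (i+1) := by
      rw [Finset.mul_sum, ← Finset.sum_neg_distrib]
      exact Finset.sum_congr rfl fun i _ => by ring
    rw [this]
    ring

theorem stmt_2 {R : Type*} [CommRing R] (β x : R) (n : ℕ) :
    fmul β n x = ∑ i ∈ Finset.Icc 1 n, (n.choose i : R) * x ^ i * (-β) ^ (i - 1) := by
  rw [fmul_range, ← Finset.Ico_add_one_right_eq_Icc, Finset.sum_Ico_eq_sum_range]
  exact Finset.sum_congr rfl fun i _ => by rw [add_comm 1 i]; simp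
end

section
/- With the β-divided difference operators φ_i(f) := ((1 + βx_{i+1})f - (1 + βx_i)sᵢf)/(x_i - x_{i+1}) on ℤ[β][x₁,…,xₙ], the braid relation φ_i ∘ φ_{i+1} ∘ φ_i = φ_{i+1} ∘ φ_i ∘ φ_{i+1} holds for all 1 ≤ i ≤ n-2. -/
open MvPolynomial

/-- The formal variable β in `ℤ[β]`. -/
noncomputable def Bv (n : ℕ) : MvPolynomial (Fin n) (Polynomial ℤ) :=
  MvPolynomial.C Polynomial.X

/-- Exchange of the variables `x_i` and `x_j`. -/
noncomputable def swp {n : ℕ} (i j : Fin n) (f : MvPolynomial (Fin n) (Polynomial ℤ)) :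
    MvPolynomial (Fin n) (Polynomial ℤ) :=
  MvPolynomial.rename (Equiv.swap i j) f

/-- The numerator `(1 + β x_{i+1}) f - (1 + β x_i) sᵢ f` of the β-divided difference. -/
noncomputable def numer {n : ℕ} (i i' : Fin n) (f : MvPolynomial (Fin n) (Polynomial ℤ)) :
    MvPolynomial (Fin n) (Polynomial ℤ) :=
  (1 + Bv n * X i') * f - (1 + Bv n * X i) * swp i i' f

/-!
Transporting the defining relation of a β-divided difference by the ring automorphisms `s`, `t`
(which fix `β` and permute `x, y, z`) gives a relation for every intermediate value of
`φ₁ φ₂ φ₁ f` and of `φ₂ φ₁ φ₂ f`. After multiplication by `(x - y)²(y - z)²(x - z)` both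
sides become the same combination of the six images `w f`, `w ∈ ⟨s, t⟩ ≅ S₃`; the braid
relation `t s t = s t s` of the swaps identifies the two occurrences of the longest element.
Since the ring is a domain, the common factor cancels.
-/

section BetaDividedDifference

variable {S : Type*} [CommRing S]

theorem map_beta_relation (ρ : S →+* S) {β a b p g h : S} (hβ : ρ β = β)
    (e : (a - b) * p = (1 + β * b) * g - (1 + β * a) * h) :
    (ρ a - ρ b) * ρ p = (1 + β * ρ b) * ρ g - (1 + β * ρ a) * ρ h := by
  simpa [hβ] using congrArg ρ e

theorem braid_of_beta_relations [IsDomain S] (s t : S →+* S) (β x y z : S)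
    (hsβ : s β = β) (htβ : t β = β)
    (hsx : s x = y) (hsy : s y = x) (hsz : s z = z)
    (htx : t x = x) (hty : t y = z) (htz : t z = y)
    (hss : ∀ g, s (s g) = g) (htt : ∀ g, t (t g) = g)
    (hbraid : ∀ g, t (s (t g)) = s (t (s g)))
    (hxy : x ≠ y) (hyz : y ≠ z) (hxz : x ≠ z) (φ₁ φ₂ : S → S)
    (h₁ : ∀ g, (x - y) * φ₁ g = (1 + β * y) * g - (1 + β * x) * s g)
    (h₂ : ∀ g, (y - z) * φ₂ g = (1 + β * z) * g - (1 + β * y) * t g) (f : S) :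
    φ₁ (φ₂ (φ₁ f)) = φ₂ (φ₁ (φ₂ f)) := by
  have hs₁ := map_beta_relation s hsβ (h₁ f)
  have ht₁ := map_beta_relation t htβ (h₁ f)
  have hst₁ := map_beta_relation s hsβ ht₁
  have hs₂ := map_beta_relation s hsβ (h₂ f)
  have ht₂ := map_beta_relation t htβ (h₂ f)
  have hts₂ := map_beta_relation t htβ hs₂
  have hs₂φ₁ := map_beta_relation s hsβ (h₂ (φ₁ f))
  have ht₁φ₂ := map_beta_relation t htβ (h₁ (φ₂ f))
  simp only [hsx, hsy, hsz, htx, hty, htz, hss, htt, hbraid]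
    at hs₁ ht₁ hst₁ hs₂ ht₂ hts₂ hs₂φ₁ ht₁φ₂
  have hD : (x - y) * (x - y) * (y - z) * (y - z) * (x - z) ≠ 0 := by
    have := sub_ne_zero.mpr hxy
    have := sub_ne_zero.mpr hyz
    have := sub_ne_zero.mpr hxz
    positivity
  apply mul_left_cancel₀ hD
  linear_combination
      ((x - y) * (y - z) * (y - z) * (x - z)) * h₁ (φ₂ (φ₁ f))
    + ((1 + β * y) * (x - y) * (y - z) * (x - z)) * h₂ (φ₁ f)
    - ((1 + β * x) * (x - y) * (y - z) * (y - z)) * hs₂φ₁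
    + ((1 + β * y) * (1 + β * z) * (y - z) * (x - z)) * h₁ f
    + ((1 + β * x) * (1 + β * z) * (y - z) * (y - z)) * hs₁
    - ((1 + β * y) * (1 + β * y) * (x - y) * (y - z)) * ht₁
    + ((1 + β * x) * (1 + β * x) * (x - y) * (y - z)) * hst₁
    - ((x - y) * (x - y) * (y - z) * (x - z)) * h₂ (φ₁ (φ₂ f))
    - ((1 + β * z) * (x - y) * (y - z) * (x - z)) * h₁ (φ₂ f)
    + ((1 + β * y) * (x - y) * (x - y) * (y - z)) * ht₁φ₂
    - ((1 + β * y) * (1 + β * z) * (x - y) * (x - z)) * h₂ f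
    + ((1 + β * x) * (1 + β * z) * (x - y) * (y - z)) * hs₂
    - ((1 + β * y) * (1 + β * z) * (x - y) * (x - y)) * ht₂
    - ((1 + β * x) * (1 + β * y) * (x - y) * (y - z)) * hts₂

end BetaDividedDifference

namespace MvPolynomial

variable {σ R : Type*} [DecidableEq σ]

theorem rename_swap_rename_swap [CommSemiring R] (a b : σ) (p : MvPolynomial σ R) :
    rename (Equiv.swap a b) (rename (Equiv.swap a b) p) = p := by
  rw [rename_rename, ← Equiv.Perm.coe_mul, Equiv.swap_mul_self, Equiv.Perm.coe_one, rename_id,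
    AlgHom.id_apply]

theorem rename_swap_braid [CommSemiring R] {a b c : σ} (hab : a ≠ b) (hac : a ≠ c)
    (hbc : b ≠ c) (p : MvPolynomial σ R) :
    rename (Equiv.swap b c) (rename (Equiv.swap a b) (rename (Equiv.swap b c) p)) =
      rename (Equiv.swap a b) (rename (Equiv.swap b c) (rename (Equiv.swap a b) p)) := by
  simp only [rename_rename, ← Equiv.Perm.coe_mul, ← mul_assoc]
  rw [Equiv.swap_mul_swap_mul_swap hab hac, Equiv.swap_comm a b, Equiv.swap_comm b c,
    Equiv.swap_mul_swap_mul_swap hbc.symm hac.symm, Equiv.swap_comm]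

theorem braid_of_swap_beta_relations [CommRing R] [IsDomain R] (β : R) {a b c : σ}
    (hab : a ≠ b) (hac : a ≠ c) (hbc : b ≠ c)
    (φ₁ φ₂ : MvPolynomial σ R → MvPolynomial σ R)
    (h₁ : ∀ g, (X a - X b) * φ₁ g =
      (1 + C β * X b) * g - (1 + C β * X a) * rename (Equiv.swap a b) g)
    (h₂ : ∀ g, (X b - X c) * φ₂ g =
      (1 + C β * X c) * g - (1 + C β * X b) * rename (Equiv.swap b c) g)
    (f : MvPolynomial σ R) :
    φ₁ (φ₂ (φ₁ f)) = φ₂ (φ₁ (φ₂ f)) :=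
  braid_of_beta_relations
    (rename (Equiv.swap a b) : MvPolynomial σ R →ₐ[R] _).toRingHom
    (rename (Equiv.swap b c) : MvPolynomial σ R →ₐ[R] _).toRingHom (C β) (X a) (X b) (X c)
    (rename_C _ _) (rename_C _ _) (by simp) (by simp)
    (by simp [Equiv.swap_apply_of_ne_of_ne hac.symm hbc.symm])
    (by simp [Equiv.swap_apply_of_ne_of_ne hab hac]) (by simp) (by simp)
    (rename_swap_rename_swap a b) (rename_swap_rename_swap b c) (rename_swap_braid hab hac hbc)
    (X_injective.ne hab) (X_injective.ne hbc) (X_injective.ne hac) φ₁ φ₂ h₁ h₂ f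

end MvPolynomial

theorem stmt_17 (n : ℕ) (i i' i'' : Fin n)
    (hi : (i : ℕ) + 1 = (i' : ℕ)) (hi' : (i' : ℕ) + 1 = (i'' : ℕ))
    (φ₁ φ₂ : MvPolynomial (Fin n) (Polynomial ℤ) → MvPolynomial (Fin n) (Polynomial ℤ))
    (hφ₁ : ∀ f, (X i - X i') * φ₁ f = numer i i' f)
    (hφ₂ : ∀ f, (X i' - X i'') * φ₂ f = numer i' i'' f) :
    ∀ f, φ₁ (φ₂ (φ₁ f)) = φ₂ (φ₁ (φ₂ f)) :=
  braid_of_swap_beta_relations Polynomial.X (Fin.ne_of_val_ne (by omega))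
    (Fin.ne_of_val_ne (by omega)) (Fin.ne_of_val_ne (by omega)) φ₁ φ₂ hφ₁ hφ₂
end

section
/- Let k = 𝔽_q and let L be an invertible module over a commutative k-algebra A. Let F: A → A be the q-power Frobenius ring homomorphism. Then the base change (pullback) of L along F is isomorphic as an A-module to L^{⊗q}, the q-th tensor power of L over A. -/
open scoped TensorProduct

/-- Frobenius pull-back of an invertible module: if `A` is an algebra over `k = 𝔽_q`
(a finite field with `q` elements), `F : A → A` is the `q`-power Frobenius, `L` is an
invertible `A`-module (with inverse `M`), and `B` is the ring `A` viewed as an `A`-algebra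
via `F` (i.e. `e : B ≃+* A` identifies `B` with `A` so that the structure map becomes `F`),
then the base change `B ⊗[A] L`, as a module over `B`, is isomorphic to the `q`-th tensor
power `L^{⊗q}` of `L` over `A` (made into a `B`-module through the identification `e`). -/
theorem stmt_19 (p m q : ℕ) (hp : p.Prime) (hq : q = p ^ m)
    (k : Type*) [Field k] [Fintype k] (hk : Fintype.card k = q)
    (A : Type*) [CommRing A] [Algebra k A]
    (F : A →+* A) (hF : ∀ a : A, F a = a ^ q)
    (L : Type*) [AddCommGroup L] [Module A L]
    (M : Type*) [AddCommGroup M] [Module A M]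
    (hLM : Nonempty ((L ⊗[A] M) ≃ₗ[A] A))
    (B : Type*) [CommRing B] [Algebra A B] (e : B ≃+* A)
    (he : ∀ a : A, e (algebraMap A B a) = F a) :
    letI : Module B (PiTensorProduct A (fun _ : Fin q => L)) :=
      Module.compHom _ e.toRingHom
    Nonempty ((B ⊗[A] L) ≃ₗ[B] PiTensorProduct A (fun _ : Fin q => L)) := by
  classical
  letI : Module B (PiTensorProduct A (fun _ : Fin q => L)) :=
    Module.compHom _ e.toRingHom
  obtain ⟨φ⟩ := hLM
  -- q ≥ 2
  have hq2 : 2 ≤ q := by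
    have h1 : 1 < Fintype.card k := Fintype.one_lt_card
    omega
  -- dual basis data
  obtain ⟨S, hu⟩ := TensorProduct.exists_finset (φ.symm 1)
  set ι := {x // x ∈ S}
  have hu' : φ.symm 1 = ∑ i : ι, (i : L × M).1 ⊗ₜ[A] (i : L × M).2 := by
    rw [hu, ← Finset.sum_coe_sort S (fun x => x.1 ⊗ₜ[A] x.2)]
  set lv : ι → L := fun i => (i : L × M).1 with hlv
  set mv : ι → M := fun i => (i : L × M).2 with hmv
  have ht : ∑ i : ι, φ (lv i ⊗ₜ[A] mv i) = 1 := by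
    have := congrArg φ hu'
    rw [φ.apply_symm_apply, map_sum] at this
    exact this.symm
  -- basic identities
  have h1 : ∀ (l : L) (mm : M),
      l ⊗ₜ[A] mm = φ (l ⊗ₜ[A] mm) • ∑ i : ι, lv i ⊗ₜ[A] mv i := by
    intro l mm
    apply φ.injective
    rw [map_smul, map_sum, ht]
    simp [smul_eq_mul]
  have h1' : ∀ (l : L) (mm : M),
      mm ⊗ₜ[A] l = φ (l ⊗ₜ[A] mm) • ∑ i : ι, mv i ⊗ₜ[A] lv i := by
    intro l mm
    apply ((TensorProduct.comm A M L).trans φ).injective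
    rw [map_smul, map_sum]
    simp only [LinearEquiv.trans_apply, TensorProduct.comm_tmul, ht, smul_eq_mul]
    exact (mul_one _).symm
  -- lam m : L →ₗ[A] A
  set lam : M → (L →ₗ[A] A) :=
    fun mm => φ.toLinearMap ∘ₗ ((TensorProduct.mk A L M).flip mm) with hlamdef
  have hlam : ∀ (mm : M) (l : L), lam mm l = φ (l ⊗ₜ[A] mm) := fun _ _ => rfl
  -- D
  set D : L →ₗ[A] L := ∑ i : ι, (lam (mv i)).smulRight (lv i) with hDdef
  have hD : ∀ l : L, D l = ∑ i : ι, φ (l ⊗ₜ[A] mv i) • lv i := by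
    intro l
    rw [hDdef]
    simp [hlam]
  -- relation ρ
  have hrho : ∀ (l l' : L) (mm : M),
      φ (l ⊗ₜ[A] mm) • l' = φ (l' ⊗ₜ[A] mm) • D l := by
    intro l l' mm
    have hmap : ∀ z : M ⊗[A] L,
        (TensorProduct.lift ((LinearMap.lsmul A L).comp
          (φ.toLinearMap ∘ₗ (TensorProduct.mk A L M l)))) z =
        (TensorProduct.lift ((LinearMap.lsmul A L).comp
          (φ.toLinearMap ∘ₗ (TensorProduct.mk A L M l)))) z := fun _ => rfl
    have := congrArg (TensorProduct.lift ((LinearMap.lsmul A L).comp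
          (φ.toLinearMap ∘ₗ (TensorProduct.mk A L M l)))) (h1' l' mm)
    simpa [map_smul, map_sum, hD] using this
  -- K
  set K : A := ∑ i : ι, φ (D (lv i) ⊗ₜ[A] mv i) with hKdef
  have hv : ∀ (l : L) (mm : M), φ (D l ⊗ₜ[A] mm) = K * φ (l ⊗ₜ[A] mm) := by
    intro l mm
    have := congrArg (fun z => φ ((LinearMap.rTensor M D) z)) (h1 l mm)
    simp only [LinearMap.rTensor_tmul, map_smul, map_sum, smul_eq_mul] at this
    rw [this, hKdef]
    exact mul_comm _ _
  have hKmul : ∀ (l : L) (mm mm' : M),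
      φ (l ⊗ₜ[A] mm) * φ (l ⊗ₜ[A] mm') = K * (φ (l ⊗ₜ[A] mm) * φ (l ⊗ₜ[A] mm')) := by
    intro l mm mm'
    have h := congrArg (fun x => φ (x ⊗ₜ[A] mm')) (hrho l l mm)
    simp only [← TensorProduct.smul_tmul', map_smul, smul_eq_mul] at h
    calc φ (l ⊗ₜ[A] mm) * φ (l ⊗ₜ[A] mm') = φ (l ⊗ₜ[A] mm) * φ (D l ⊗ₜ[A] mm') := h
    _ = φ (l ⊗ₜ[A] mm) * (K * φ (l ⊗ₜ[A] mm')) := by rw [hv]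
    _ = K * (φ (l ⊗ₜ[A] mm) * φ (l ⊗ₜ[A] mm')) := by ring
  -- F additivity gives sum of q-th powers = 1
  have hsum_q : ∑ i : ι, (φ (lv i ⊗ₜ[A] mv i)) ^ q = 1 := by
    have := congrArg F ht
    rw [map_sum, map_one] at this
    simpa [hF] using this
  have hK : K = 1 := by
    have hterm : ∀ i : ι, (φ (lv i ⊗ₜ[A] mv i)) ^ q
        = K * (φ (lv i ⊗ₜ[A] mv i)) ^ q := by
      intro i
      set t := φ (lv i ⊗ₜ[A] mv i)
      have h2 : t ^ q = t ^ (q - 2) * (t * t) := by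
        rw [← pow_two, ← pow_add]
        congr 1
        omega
      have h3 : t * t = K * (t * t) := hKmul (lv i) (mv i) (mv i)
      calc t ^ q = t ^ (q - 2) * (t * t) := h2
      _ = t ^ (q - 2) * (K * (t * t)) := by rw [← h3]
      _ = K * (t ^ (q - 2) * (t * t)) := by ring
      _ = K * t ^ q := by rw [← h2]
    calc K = K * 1 := (mul_one K).symm
    _ = K * ∑ i : ι, (φ (lv i ⊗ₜ[A] mv i)) ^ q := by rw [hsum_q]
    _ = ∑ i : ι, K * (φ (lv i ⊗ₜ[A] mv i)) ^ q := Finset.mul_sum _ _ _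
    _ = ∑ i : ι, (φ (lv i ⊗ₜ[A] mv i)) ^ q := by
        exact Finset.sum_congr rfl (fun i _ => (hterm i).symm)
    _ = 1 := hsum_q
  -- dual basis identity
  have hDD : ∀ l : L, D (D l) = D l := by
    intro l
    have hstep : ∑ i : ι, φ (D l ⊗ₜ[A] mv i) • lv i = ∑ i : ι, φ (l ⊗ₜ[A] mv i) • lv i :=
      Finset.sum_congr rfl (fun i _ => by rw [hv, hK, one_mul])
    rw [hD (D l), hstep, ← hD l]
  have hDB : ∀ l : L, D l = l := by
    intro l
    have step : l = D (D l) := by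
      calc l = (∑ i : ι, φ (lv i ⊗ₜ[A] mv i)) • l := by rw [ht, one_smul]
      _ = ∑ i : ι, φ (lv i ⊗ₜ[A] mv i) • l := Finset.sum_smul
      _ = ∑ i : ι, φ (l ⊗ₜ[A] mv i) • D (lv i) := by
          exact Finset.sum_congr rfl (fun i _ => hrho (lv i) l (mv i))
      _ = D (∑ i : ι, φ (l ⊗ₜ[A] mv i) • lv i) := by
          rw [map_sum]
          exact Finset.sum_congr rfl (fun i _ => (D.map_smul _ _).symm)
      _ = D (D l) := by rw [← hD]
    rw [step, hDD]
  have star : ∀ (l l' : L) (mm mm' : M),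
      φ (l ⊗ₜ[A] mm) * φ (l' ⊗ₜ[A] mm') = φ (l' ⊗ₜ[A] mm) * φ (l ⊗ₜ[A] mm') := by
    intro l l' mm mm'
    have hA : φ (l ⊗ₜ[A] mm) • l' = φ (l' ⊗ₜ[A] mm) • l := by
      rw [hrho l l' mm, hDB]
    have := congrArg (fun x => φ (x ⊗ₜ[A] mm')) hA
    simp only [← TensorProduct.smul_tmul', map_smul, smul_eq_mul] at this
    exact this
  -- the functionals Xf on the tensor power
  set T := PiTensorProduct A (fun _ : Fin q => L) with hT
  set Xf : (Fin q → M) → (T →ₗ[A] A) := fun mm =>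
    PiTensorProduct.lift
      ((MultilinearMap.mkPiAlgebra A (Fin q) A).compLinearMap (fun t => lam (mm t)))
    with hXfdef
  have hXf : ∀ (mm : Fin q → M) (x : Fin q → L),
      Xf mm (PiTensorProduct.tprod A x) = ∏ t : Fin q, φ (x t ⊗ₜ[A] mm t) := by
    intro mm x
    rw [hXfdef]
    rw [PiTensorProduct.lift.tprod]
    rw [MultilinearMap.compLinearMap_apply, MultilinearMap.mkPiAlgebra_apply]
    exact Finset.prod_congr rfl (fun t _ => hlam (mm t) (x t))
  -- the shuffling identity
  have SC2 : ∀ (mm : Fin q → M) (m0 : M) (i : ι) (z : T),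
      (φ (lv i ⊗ₜ[A] m0)) ^ q * Xf mm z
        = (∏ t : Fin q, φ (lv i ⊗ₜ[A] mm t)) * Xf (fun _ => m0) z := by
    intro mm m0 i z
    induction z using PiTensorProduct.induction_on with
    | smul_tprod r x =>
        rw [map_smul, map_smul, smul_eq_mul, smul_eq_mul, hXf, hXf]
        have core : (φ (lv i ⊗ₜ[A] m0)) ^ q * ∏ t : Fin q, φ (x t ⊗ₜ[A] mm t)
            = (∏ t : Fin q, φ (lv i ⊗ₜ[A] mm t)) * ∏ t : Fin q, φ (x t ⊗ₜ[A] m0) := by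
          have hpow : (φ (lv i ⊗ₜ[A] m0)) ^ q
              = ∏ _t : Fin q, φ (lv i ⊗ₜ[A] m0) := by
            rw [Finset.prod_const, Finset.card_univ, Fintype.card_fin]
          rw [hpow, ← Finset.prod_mul_distrib, ← Finset.prod_mul_distrib]
          exact Finset.prod_congr rfl (fun t _ => by
            rw [star (lv i) (x t) m0 (mm t)]; ring)
        linear_combination r * core
    | add z w hz hw =>
        rw [map_add, map_add]
        linear_combination hz + hw
  -- algebraMap A B via e
  have halg : ∀ a : A, algebraMap A B a = e.symm (a ^ q) := by
    intro a
    have h2 := congrArg e.symm (he a)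
    rw [e.symm_apply_apply] at h2
    rw [h2, hF]
  -- the candidate inverse map g : T → B ⊗[A] L
  set gfun : T → B ⊗[A] L :=
    fun z => ∑ i : ι, e.symm (Xf (fun _ => mv i) z) ⊗ₜ[A] lv i with hgfun
  have hbsmul : ∀ (b : B) (z : T), b • z = e b • z := fun _ _ => rfl
  have gadd : ∀ z w, gfun (z + w) = gfun z + gfun w := by
    intro z w
    rw [hgfun]
    simp only [map_add]
    rw [← Finset.sum_add_distrib]
    exact Finset.sum_congr rfl (fun i _ => by rw [TensorProduct.add_tmul])
  have gsmul : ∀ (b : B) (z : T), gfun (b • z) = b • gfun z := by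
    intro b z
    rw [hgfun, hbsmul]
    simp only []
    rw [Finset.smul_sum]
    refine Finset.sum_congr rfl (fun i _ => ?_)
    rw [map_smul, smul_eq_mul, map_mul, e.symm_apply_apply]
    rw [TensorProduct.smul_tmul', smul_eq_mul]
  -- value on pure powers
  have hgpow : ∀ l : L,
      gfun (PiTensorProduct.tprod A (fun _ : Fin q => l)) = (1 : B) ⊗ₜ[A] l := by
    intro l
    rw [hgfun]
    simp only []
    have hterm : ∀ i : ι,
        e.symm (Xf (fun _ => mv i) (PiTensorProduct.tprod A (fun _ : Fin q => l))) ⊗ₜ[A] lv i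
          = (1 : B) ⊗ₜ[A] (φ (l ⊗ₜ[A] mv i) • lv i) := by
      intro i
      rw [hXf]
      rw [Finset.prod_const, Finset.card_univ, Fintype.card_fin]
      rw [← halg, Algebra.algebraMap_eq_smul_one, TensorProduct.smul_tmul]
    calc ∑ i : ι,
        e.symm (Xf (fun _ => mv i) (PiTensorProduct.tprod A (fun _ : Fin q => l))) ⊗ₜ[A] lv i
        = ∑ i : ι, (1 : B) ⊗ₜ[A] (φ (l ⊗ₜ[A] mv i) • lv i) :=
          Finset.sum_congr rfl (fun i _ => hterm i)
    _ = (1 : B) ⊗ₜ[A] (∑ i : ι, φ (l ⊗ₜ[A] mv i) • lv i) :=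
          (TensorProduct.tmul_sum _ _ _).symm
    _ = (1 : B) ⊗ₜ[A] l := by rw [← hD, hDB]
  -- surjectivity
  have hgsurj : Function.Surjective gfun := by
    intro x
    induction x using TensorProduct.induction_on with
    | zero =>
        refine ⟨0, ?_⟩
        rw [hgfun]
        simp
    | tmul b l =>
        refine ⟨b • PiTensorProduct.tprod A (fun _ : Fin q => l), ?_⟩
        rw [gsmul, hgpow, TensorProduct.smul_tmul', smul_eq_mul, mul_one]
    | add x y hx hy =>
        obtain ⟨zx, hzx⟩ := hx
        obtain ⟨zy, hzy⟩ := hy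
        exact ⟨zx + zy, by rw [gadd, hzx, hzy]⟩
  -- injectivity: step 1, pairing the image with M
  have hXi : ∀ (m0 : M) (z : T), gfun z = 0 →
      ∑ i : ι, Xf (fun _ => mv i) z * (φ (lv i ⊗ₜ[A] m0)) ^ q = 0 := by
    intro m0 z hz
    set Ξ : (B ⊗[A] L) →ₗ[A] B := TensorProduct.lift (LinearMap.mk₂ A
      (fun b x => b * algebraMap A B (φ (x ⊗ₜ[A] m0)))
      (fun b₁ b₂ x => by simp only [add_mul])
      (fun a b x => by simp only [Algebra.smul_def]; ring)
      (fun b x₁ x₂ => by simp only [TensorProduct.add_tmul, map_add, mul_add])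
      (fun a b x => by
        simp only [← TensorProduct.smul_tmul', map_smul, smul_eq_mul, map_mul,
          Algebra.smul_def]
        ring)) with hXidef
    have hXitmul : ∀ (b : B) (x : L), Ξ (b ⊗ₜ[A] x) = b * algebraMap A B (φ (x ⊗ₜ[A] m0)) := by
      intro b x
      rw [hXidef]
      rfl
    have h0 : Ξ (gfun z) = 0 := by rw [hz, map_zero]
    rw [hgfun] at h0
    simp only [] at h0
    rw [map_sum] at h0
    have h1 : ∀ i : ι, Ξ (e.symm (Xf (fun _ => mv i) z) ⊗ₜ[A] lv i)
        = e.symm (Xf (fun _ => mv i) z * (φ (lv i ⊗ₜ[A] m0)) ^ q) := by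
      intro i
      rw [hXitmul, halg, ← map_mul]
    rw [Finset.sum_congr rfl (fun i _ => h1 i), ← map_sum] at h0
    have h2 := congrArg e h0
    rw [e.apply_symm_apply, map_zero] at h2
    exact h2
  -- injectivity: step 2, all "diagonal" functionals vanish
  have HY : ∀ (z : T), gfun z = 0 → ∀ m0 : M, Xf (fun _ => m0) z = 0 := by
    intro z hz m0
    have h1q : ∀ i : ι, (φ (lv i ⊗ₜ[A] mv i)) ^ q * Xf (fun _ => m0) z
        = (φ (lv i ⊗ₜ[A] m0)) ^ q * Xf (fun _ => mv i) z := by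
      intro i
      have h := SC2 (fun _ => mv i) m0 i z
      rw [Finset.prod_const, Finset.card_univ, Fintype.card_fin] at h
      exact h.symm
    calc Xf (fun _ => m0) z
        = (∑ i : ι, (φ (lv i ⊗ₜ[A] mv i)) ^ q) * Xf (fun _ => m0) z := by
          rw [hsum_q, one_mul]
    _ = ∑ i : ι, (φ (lv i ⊗ₜ[A] mv i)) ^ q * Xf (fun _ => m0) z := Finset.sum_mul _ _ _
    _ = ∑ i : ι, (φ (lv i ⊗ₜ[A] m0)) ^ q * Xf (fun _ => mv i) z :=
          Finset.sum_congr rfl (fun i _ => h1q i)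
    _ = ∑ i : ι, Xf (fun _ => mv i) z * (φ (lv i ⊗ₜ[A] m0)) ^ q :=
          Finset.sum_congr rfl (fun i _ => mul_comm _ _)
    _ = 0 := hXi m0 z hz
  -- injectivity: step 3, all functionals vanish
  have HX : ∀ (z : T), gfun z = 0 → ∀ mm : Fin q → M, Xf mm z = 0 := by
    intro z hz mm
    calc Xf mm z = (∑ i : ι, (φ (lv i ⊗ₜ[A] mv i)) ^ q) * Xf mm z := by
          rw [hsum_q, one_mul]
    _ = ∑ i : ι, (φ (lv i ⊗ₜ[A] mv i)) ^ q * Xf mm z := Finset.sum_mul _ _ _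
    _ = ∑ i : ι, (∏ t : Fin q, φ (lv i ⊗ₜ[A] mm t)) * Xf (fun _ => mv i) z :=
          Finset.sum_congr rfl (fun i _ => SC2 mm (mv i) i z)
    _ = 0 := Finset.sum_eq_zero (fun i _ => by rw [HY z hz (mv i), mul_zero])
  -- expansion of an arbitrary element in terms of the functionals
  have EXP : ∀ z : T, z = ∑ j : (Fin q → ι), Xf (fun t => mv (j t)) z •
      PiTensorProduct.tprod A (fun t => lv (j t)) := by
    intro z
    induction z using PiTensorProduct.induction_on with
    | smul_tprod r x =>
        have pure : (PiTensorProduct.tprod A) x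
            = ∑ j : (Fin q → ι), (∏ t : Fin q, φ (x t ⊗ₜ[A] mv (j t))) •
                (PiTensorProduct.tprod A) (fun t => lv (j t)) := by
          have hx : (PiTensorProduct.tprod A) x
              = (PiTensorProduct.tprod A) (fun t => ∑ i : ι, φ (x t ⊗ₜ[A] mv i) • lv i) := by
            congr 1
            funext t
            rw [← hD, hDB]
          rw [hx, MultilinearMap.map_sum]
          exact Finset.sum_congr rfl (fun j _ => MultilinearMap.map_smul_univ _ _ _)
        calc r • (PiTensorProduct.tprod A) x
            = r • ∑ j : (Fin q → ι), (∏ t : Fin q, φ (x t ⊗ₜ[A] mv (j t))) •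
                (PiTensorProduct.tprod A) (fun t => lv (j t)) := by rw [← pure]
        _ = ∑ j : (Fin q → ι), Xf (fun t => mv (j t)) (r • (PiTensorProduct.tprod A) x) •
                (PiTensorProduct.tprod A) (fun t => lv (j t)) := by
            rw [Finset.smul_sum]
            refine Finset.sum_congr rfl (fun j _ => ?_)
            rw [map_smul, smul_eq_mul, hXf, smul_smul]
    | add z w hz hw =>
        conv_lhs => rw [hz, hw]
        rw [← Finset.sum_add_distrib]
        refine Finset.sum_congr rfl (fun j _ => ?_)
        rw [map_add, add_smul]
  -- conclude injectivity
  have hker : ∀ z : T, gfun z = 0 → z = 0 := by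
    intro z hz
    rw [EXP z]
    exact Finset.sum_eq_zero (fun j _ => by rw [HX z hz, zero_smul])
  -- assemble the linear equivalence
  let g : T →ₗ[B] (B ⊗[A] L) :=
    { toFun := gfun
      map_add' := gadd
      map_smul' := fun b z => gsmul b z }
  have hgeq : ∀ z : T, g z = gfun z := fun _ => rfl
  have hbij : Function.Bijective g := by
    constructor
    · intro z w hzw
      have h0 : gfun (z - w) = 0 := by
        have : g (z - w) = 0 := by rw [map_sub, hzw, sub_self]
        rw [← hgeq]
        exact this
      exact sub_eq_zero.mp (hker _ h0)
    · intro x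
      obtain ⟨z, hzx⟩ := hgsurj x
      exact ⟨z, hzx⟩
  exact ⟨(LinearEquiv.ofBijective g hbij).symm⟩
end
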